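/- The linear map τ: L → R defined on basis elements by τ(L_{m,i}) = (1/2)L_{2m,i} and τ(G_{r,j}) = (1/√2)G_{2r,j} is an injective homomorphism of Lie superalgebras from the Neveu-Schwarz-Block algebra to the Ramond-Block algebra; i.e., τ([L_{m,i}, L_{n,j}]) = [τ(L_{m,i}), τ(L_{n,j})], τ([L_{m,i}, G_{r,j}]) = [τ(L_{m,i}), τ(G_{r,j})], and τ([G_{l,i}, G_{r,j}]) = [τ(G_{l,i}), τ(G_{r,j})]. -/

import Mathlib

/-! τ doubles every mode index: `m ↦ 2m` on even generators and `r = k + 1/2 ↦ 2r = 2k + 1` on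
odd ones. The structure constants of `[L, L]` and `[L, G]` are homogeneous of degree one in the
mode indices, so doubling them doubles the bracket, which the factor `1/2` of `τ` on the even part
absorbs. The constant `2q` of `[G, G]` does not scale, and there `(1/√2)² = 1/2` matches. -/

/-- The free `ℂ`-vector space with basis indexed by `ℤ × ℤ₊`; it models both the even
part (basis `L_{m,i}`) and the odd part (basis `G_{l,j}`, where for the
Neveu-Schwarz-Block algebra the index `k ∈ ℤ` stands for `l = k + 1/2 ∈ 1/2 + ℤ`). -/
abbrev BlockSpan : Type := (ℤ × ℕ) →₀ ℂ

/-- Basis element with index `(m, i)`. -/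
noncomputable def bs (m : ℤ) (i : ℕ) : BlockSpan := Finsupp.single (m, i) 1

/-- The linear map `τ` on even parts: `L_{m,i} ↦ (1/2) L_{2m,i}`. -/
noncomputable def tau0 : BlockSpan →ₗ[ℂ] BlockSpan :=
  (1 / 2 : ℂ) • Finsupp.lmapDomain ℂ ℂ (fun p : ℤ × ℕ => (2 * p.1, p.2))

/-- The linear map `τ` on odd parts: `G_{k+1/2,j} ↦ (1/√2) G_{2k+1,j}`
(odd NSB indices `r = k + 1/2` are encoded by `k ∈ ℤ`, odd RB indices by `ℤ`). -/
noncomputable def tau1 : BlockSpan →ₗ[ℂ] BlockSpan :=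
  ((Real.sqrt 2 : ℂ))⁻¹ • Finsupp.lmapDomain ℂ ℂ (fun p : ℤ × ℕ => (2 * p.1 + 1, p.2))

open Function

theorem Finsupp.smul_lmapDomain_injective {α β K M : Type*} [Field K]
    [AddCommMonoid M] [Module K M] {c : K} (hc : c ≠ 0)
    {f : α → β} (hf : Injective f) : Injective (c • Finsupp.lmapDomain M K f) :=
  (smul_right_injective _ hc).comp (Finsupp.mapDomain_injective hf)

theorem tau0_injective : Injective tau0 :=
  Finsupp.smul_lmapDomain_injective (by norm_num)
    ((mul_right_injective₀ two_ne_zero).prodMap injective_id)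

theorem tau1_injective : Injective tau1 :=
  Finsupp.smul_lmapDomain_injective (by simp)
    (((add_left_injective 1).comp (mul_right_injective₀ two_ne_zero)).prodMap injective_id)

theorem tau0_bs (m : ℤ) (i : ℕ) : tau0 (bs m i) = (1 / 2 : ℂ) • bs (2 * m) i := by
  simp [tau0, bs, Finsupp.mapDomain_single]

theorem tau1_bs (k : ℤ) (i : ℕ) :
    tau1 (bs k i) = ((Real.sqrt 2 : ℂ))⁻¹ • bs (2 * k + 1) i := by
  simp [tau1, bs, Finsupp.mapDomain_single]

theorem ofReal_sqrt_two_inv_mul_self :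
    ((Real.sqrt 2 : ℂ))⁻¹ * ((Real.sqrt 2 : ℂ))⁻¹ = 1 / 2 := by
  rw [← mul_inv, ← Complex.ofReal_mul, Real.mul_self_sqrt zero_le_two]
  norm_num

section Brackets

variable (q : ℂ) {bL bR : BlockSpan →ₗ[ℂ] BlockSpan →ₗ[ℂ] BlockSpan}

theorem tau0_map_evenBracket
    (hR : ∀ (m n : ℤ) (i j : ℕ), bR (bs m i) (bs n j) =
      ((n : ℂ) * ((i : ℂ) + q) - (m : ℂ) * ((j : ℂ) + q)) • bs (m + n) (i + j))
    (hL : ∀ (m n : ℤ) (i j : ℕ), bL (bs m i) (bs n j) =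
      ((n : ℂ) * ((i : ℂ) + q) - (m : ℂ) * ((j : ℂ) + q)) • bs (m + n) (i + j))
    (m n : ℤ) (i j : ℕ) :
    tau0 (bL (bs m i) (bs n j)) = bR (tau0 (bs m i)) (tau0 (bs n j)) := by
  rw [hL, map_smul, tau0_bs, tau0_bs, tau0_bs, map_smul, LinearMap.map_smul₂, hR, smul_smul,
    smul_smul, smul_smul]
  congr 1
  · push_cast
    ring
  · rw [mul_add]

theorem tau1_map_mixedBracket
    (hR : ∀ (m l : ℤ) (i j : ℕ), bR (bs m i) (bs l j) =
      ((l : ℂ) * ((i : ℂ) + q) - (m : ℂ) * ((j : ℂ) + q / 2)) • bs (m + l) (i + j))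
    (hL : ∀ (m k : ℤ) (i j : ℕ), bL (bs m i) (bs k j) =
      (((k : ℂ) + 1 / 2) * ((i : ℂ) + q) - (m : ℂ) * ((j : ℂ) + q / 2)) • bs (m + k) (i + j))
    (m k : ℤ) (i j : ℕ) :
    tau1 (bL (bs m i) (bs k j)) = bR (tau0 (bs m i)) (tau1 (bs k j)) := by
  rw [hL, map_smul, tau1_bs, tau0_bs, tau1_bs, map_smul, LinearMap.map_smul₂, hR, smul_smul,
    smul_smul, smul_smul]
  congr 1
  · push_cast
    ring
  · congr 1
    ring

theorem tau0_map_oddBracket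
    (hR : ∀ (l r : ℤ) (i j : ℕ), bR (bs l i) (bs r j) = (2 * q) • bs (l + r) (i + j))
    (hL : ∀ (k k' : ℤ) (i j : ℕ), bL (bs k i) (bs k' j) = (2 * q) • bs (k + k' + 1) (i + j))
    (k k' : ℤ) (i j : ℕ) :
    tau0 (bL (bs k i) (bs k' j)) = bR (tau1 (bs k i)) (tau1 (bs k' j)) := by
  rw [hL, map_smul, tau0_bs, tau1_bs, tau1_bs, map_smul, LinearMap.map_smul₂, hR, smul_smul,
    smul_smul, smul_smul, ← mul_assoc, ofReal_sqrt_two_inv_mul_self]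
  congr 1
  · ring
  · congr 1
    ring

end Brackets

theorem tau_injective_superalgebra_hom_general (q : ℂ)
    (bL00 bR00 : BlockSpan →ₗ[ℂ] BlockSpan →ₗ[ℂ] BlockSpan)
    (bL01 bR01 : BlockSpan →ₗ[ℂ] BlockSpan →ₗ[ℂ] BlockSpan)
    (bL11 bR11 : BlockSpan →ₗ[ℂ] BlockSpan →ₗ[ℂ] BlockSpan)
    (hR00 : ∀ (m n : ℤ) (i j : ℕ), bR00 (bs m i) (bs n j) =
      ((n : ℂ) * ((i : ℂ) + q) - (m : ℂ) * ((j : ℂ) + q)) • bs (m + n) (i + j))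
    (hR01 : ∀ (m l : ℤ) (i j : ℕ), bR01 (bs m i) (bs l j) =
      ((l : ℂ) * ((i : ℂ) + q) - (m : ℂ) * ((j : ℂ) + q / 2)) • bs (m + l) (i + j))
    (hR11 : ∀ (l r : ℤ) (i j : ℕ), bR11 (bs l i) (bs r j) =
      (2 * q) • bs (l + r) (i + j))
    (hL00 : ∀ (m n : ℤ) (i j : ℕ), bL00 (bs m i) (bs n j) =
      ((n : ℂ) * ((i : ℂ) + q) - (m : ℂ) * ((j : ℂ) + q)) • bs (m + n) (i + j))
    (hL01 : ∀ (m k : ℤ) (i j : ℕ), bL01 (bs m i) (bs k j) =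
      (((k : ℂ) + 1 / 2) * ((i : ℂ) + q) - (m : ℂ) * ((j : ℂ) + q / 2)) • bs (m + k) (i + j))
    (hL11 : ∀ (k k' : ℤ) (i j : ℕ), bL11 (bs k i) (bs k' j) =
      (2 * q) • bs (k + k' + 1) (i + j)) :
    Function.Injective tau0 ∧ Function.Injective tau1 ∧
    (∀ (m n : ℤ) (i j : ℕ),
      tau0 (bL00 (bs m i) (bs n j)) = bR00 (tau0 (bs m i)) (tau0 (bs n j))) ∧
    (∀ (m k : ℤ) (i j : ℕ),
      tau1 (bL01 (bs m i) (bs k j)) = bR01 (tau0 (bs m i)) (tau1 (bs k j))) ∧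
    (∀ (k k' : ℤ) (i j : ℕ),
      tau0 (bL11 (bs k i) (bs k' j)) = bR11 (tau1 (bs k i)) (tau1 (bs k' j))) :=
  ⟨tau0_injective, tau1_injective, tau0_map_evenBracket q hR00 hL00,
    tau1_map_mixedBracket q hR01 hL01, tau0_map_oddBracket q hR11 hL11⟩

/-- The linear map `τ : L → R`, `τ(L_{m,i}) = (1/2)L_{2m,i}`, `τ(G_{r,j}) = (1/√2)G_{2r,j}`,
is an injective homomorphism of Lie superalgebras from the Neveu-Schwarz-Block algebra to
the Ramond-Block algebra: it is injective and intertwines all three brackets on basis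
elements. Here `bL00, bL01, bL11` (resp. `bR00, bR01, bR11`) are the bilinear brackets of
the NSB (resp. RB) algebra, prescribed on basis elements by the structure constants of
Definition 1.1. -/
theorem tau_injective_superalgebra_hom (q : ℂ) (hq : q ≠ 0)
    (bL00 bR00 : BlockSpan →ₗ[ℂ] BlockSpan →ₗ[ℂ] BlockSpan)
    (bL01 bR01 : BlockSpan →ₗ[ℂ] BlockSpan →ₗ[ℂ] BlockSpan)
    (bL11 bR11 : BlockSpan →ₗ[ℂ] BlockSpan →ₗ[ℂ] BlockSpan)
    (hR00 : ∀ (m n : ℤ) (i j : ℕ), bR00 (bs m i) (bs n j) =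
      ((n : ℂ) * ((i : ℂ) + q) - (m : ℂ) * ((j : ℂ) + q)) • bs (m + n) (i + j))
    (hR01 : ∀ (m l : ℤ) (i j : ℕ), bR01 (bs m i) (bs l j) =
      ((l : ℂ) * ((i : ℂ) + q) - (m : ℂ) * ((j : ℂ) + q / 2)) • bs (m + l) (i + j))
    (hR11 : ∀ (l r : ℤ) (i j : ℕ), bR11 (bs l i) (bs r j) =
      (2 * q) • bs (l + r) (i + j))
    (hL00 : ∀ (m n : ℤ) (i j : ℕ), bL00 (bs m i) (bs n j) =
      ((n : ℂ) * ((i : ℂ) + q) - (m : ℂ) * ((j : ℂ) + q)) • bs (m + n) (i + j))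
    (hL01 : ∀ (m k : ℤ) (i j : ℕ), bL01 (bs m i) (bs k j) =
      (((k : ℂ) + 1 / 2) * ((i : ℂ) + q) - (m : ℂ) * ((j : ℂ) + q / 2)) • bs (m + k) (i + j))
    (hL11 : ∀ (k k' : ℤ) (i j : ℕ), bL11 (bs k i) (bs k' j) =
      (2 * q) • bs (k + k' + 1) (i + j)) :
    Function.Injective tau0 ∧ Function.Injective tau1 ∧
    (∀ (m n : ℤ) (i j : ℕ),
      tau0 (bL00 (bs m i) (bs n j)) = bR00 (tau0 (bs m i)) (tau0 (bs n j))) ∧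
    (∀ (m k : ℤ) (i j : ℕ),
      tau1 (bL01 (bs m i) (bs k j)) = bR01 (tau0 (bs m i)) (tau1 (bs k j))) ∧
    (∀ (k k' : ℤ) (i j : ℕ),
      tau0 (bL11 (bs k i) (bs k' j)) = bR11 (tau1 (bs k i)) (tau1 (bs k' j))) :=
  tau_injective_superalgebra_hom_general q bL00 bR00 bL01 bR01 bL11 bR11 hR00 hR01 hR11 hL00 hL01
    hL11
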